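/- Let X and Y be complex Banach spaces and suppose Y has the bounded approximation property. Then K(X,Y)** is isomorphic to a complemented subspace of L(X,Y)**: there exist bounded linear maps i : K(X,Y)** → L(X,Y)** and R : L(X,Y)** → K(X,Y)** such that i is an isomorphic embedding and R ∘ i = id on K(X,Y)**. -/

import Mathlib

open Filter Topology NormedSpace
open scoped ENNReal

noncomputable section

/-- `ℓ∞` : the Banach space of bounded complex sequences with the sup norm. -/
abbrev LinftySeq : Type := ↥(lp (fun _ : ℕ => ℂ) ∞)

/-- The predicate on `ℓ∞` of belonging to `c₀` (i.e. tending to zero). -/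
def IsC0 (α : LinftySeq) : Prop := Tendsto (fun k => α k) atTop (𝓝 (0 : ℂ))

/-- `c₀` as a (closed) submodule of `ℓ∞`, with the induced sup norm. -/
def c0 : Submodule ℂ LinftySeq where
  carrier := {α | IsC0 α}
  add_mem' := by
    intro a b ha hb
    have := ha.add hb
    simpa [IsC0, lp.coeFn_add] using this
  zero_mem' := by
    simp only [Set.mem_setOf_eq, IsC0, lp.coeFn_zero, Pi.zero_apply]
    exact tendsto_const_nhds
  smul_mem' := by
    intro c a ha
    have := ha.const_mul c
    simpa [IsC0, lp.coeFn_smul, smul_eq_mul] using this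

/-- The subspace `K(X,Y)` of compact operators inside `L(X,Y)`. -/
abbrev KOp (X Y : Type*) [NormedAddCommGroup X] [NormedSpace ℂ X]
    [NormedAddCommGroup Y] [NormedSpace ℂ Y] : Submodule ℂ (X →L[ℂ] Y) :=
  compactOperator (RingHom.id ℂ) X Y

/-- The canonical basis vector `e k` of `c₀`. -/
def eSeq (k : ℕ) : ↥c0 :=
  ⟨lp.single ∞ k (1 : ℂ), by
    have h : ∀ᶠ j in atTop, (lp.single ∞ k (1 : ℂ) : ∀ _ : ℕ, ℂ) j = 0 := by
      filter_upwards [eventually_gt_atTop k] with j hj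
      exact lp.single_apply_ne ∞ k _ (by omega)
    exact Tendsto.congr' (h.mono fun j hj => hj.symm) tendsto_const_nhds⟩

/-- The bounded approximation property. -/
def HasBAP (E : Type*) [NormedAddCommGroup E] [NormedSpace ℂ E] : Prop :=
  ∃ lam : ℝ, 1 ≤ lam ∧ ∀ K : Set E, IsCompact K → ∀ ε : ℝ, 0 < ε →
    ∃ V : E →L[ℂ] E, FiniteDimensional ℂ ↥(LinearMap.range (V : E →ₗ[ℂ] E)) ∧ ‖V‖ ≤ lam ∧
      ∀ x ∈ K, ‖V x - x‖ ≤ ε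

/-- The topological dual `E →L[𝕜] 𝕜`, as `NormedSpace.Dual` was defined in the older Mathlib. -/
def NormedSpace.Dual (𝕜 : Type*) [NontriviallyNormedField 𝕜] (E : Type*) [SeminormedAddCommGroup E]
    [NormedSpace 𝕜 E] : Type _ :=
  E →L[𝕜] 𝕜

instance NormedSpace.Dual.instSeminormedAddCommGroup (𝕜 : Type*) [NontriviallyNormedField 𝕜]
    (E : Type*) [SeminormedAddCommGroup E] [NormedSpace 𝕜 E] :
    SeminormedAddCommGroup (NormedSpace.Dual 𝕜 E) :=
  ContinuousLinearMap.toSeminormedAddCommGroup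

instance NormedSpace.Dual.instNormedSpace (𝕜 : Type*) [NontriviallyNormedField 𝕜]
    (E : Type*) [SeminormedAddCommGroup E] [NormedSpace 𝕜 E] :
    NormedSpace 𝕜 (NormedSpace.Dual 𝕜 E) :=
  ContinuousLinearMap.toNormedSpace

instance NormedSpace.Dual.instFunLike (𝕜 : Type*) [NontriviallyNormedField 𝕜]
    (E : Type*) [SeminormedAddCommGroup E] [NormedSpace 𝕜 E] :
    FunLike (NormedSpace.Dual 𝕜 E) E 𝕜 :=
  ContinuousLinearMap.funLike

instance NormedSpace.Dual.instContinuousLinearMapClass (𝕜 : Type*) [NontriviallyNormedField 𝕜]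
    (E : Type*) [SeminormedAddCommGroup E] [NormedSpace 𝕜 E] :
    ContinuousLinearMapClass (NormedSpace.Dual 𝕜 E) 𝕜 E 𝕜 :=
  ContinuousLinearMap.continuousSemilinearMapClass

@[ext] lemma NormedSpace.Dual.ext' {𝕜 : Type*} [NontriviallyNormedField 𝕜]
    {E : Type*} [SeminormedAddCommGroup E] [NormedSpace 𝕜 E] {f g : NormedSpace.Dual 𝕜 E}
    (h : ∀ x, f x = g x) : f = g :=
  ContinuousLinearMap.ext h

namespace Stmt14Aux

section Transpose

variable {E F : Type*} [SeminormedAddCommGroup E] [NormedSpace ℂ E]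
  [SeminormedAddCommGroup F] [NormedSpace ℂ F]

/-- Transpose of a continuous linear map, as a map between duals. -/
def tr (T : E →L[ℂ] F) : Dual ℂ F →L[ℂ] Dual ℂ E :=
  (ContinuousLinearMap.compL ℂ E F ℂ).flip T

@[simp] lemma tr_apply (T : E →L[ℂ] F) (f : Dual ℂ F) (x : E) : tr T f x = f (T x) := rfl

end Transpose

variable {E F : Type*} [NormedAddCommGroup E] [NormedSpace ℂ E]
  [NormedAddCommGroup F] [NormedSpace ℂ F]

/-- A continuous linear map with finite dimensional range is a compact operator. -/
lemma isCompactOperator_of_finiteRank {V : E →L[ℂ] F}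
    (h : FiniteDimensional ℂ ↥(LinearMap.range (V : E →ₗ[ℂ] F))) : IsCompactOperator V := by
  haveI := h
  refine ⟨Subtype.val '' Metric.closedBall (0 : ↥(LinearMap.range (V : E →ₗ[ℂ] F))) ‖V‖,
    ((isCompact_closedBall _ _).image continuous_subtype_val), ?_⟩
  have hsub : Metric.closedBall (0 : E) 1 ⊆
      V ⁻¹' (Subtype.val '' Metric.closedBall (0 : ↥(LinearMap.range (V : E →ₗ[ℂ] F))) ‖V‖) := by
    intro x hx
    refine ⟨⟨V x, LinearMap.mem_range_self _ x⟩, ?_, rfl⟩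
    rw [Metric.mem_closedBall, dist_zero_right]
    calc ‖(⟨V x, LinearMap.mem_range_self _ x⟩ : ↥(LinearMap.range (V : E →ₗ[ℂ] F)))‖ = ‖V x‖ := rfl
      _ ≤ ‖V‖ * ‖x‖ := V.le_opNorm x
      _ ≤ ‖V‖ * 1 := by
          have := Metric.mem_closedBall.mp hx
          rw [dist_zero_right] at this
          exact mul_le_mul_of_nonneg_left this (norm_nonneg _)
      _ = ‖V‖ := mul_one _
  exact Filter.mem_of_superset (Metric.closedBall_mem_nhds _ one_pos) hsub

/-- Index set for the BAP net: pairs of a compact set and a positive tolerance. -/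
structure Idx (Y : Type*) [NormedAddCommGroup Y] where
  s : Set Y
  eps : ℝ
  hs : IsCompact s
  heps : 0 < eps

instance (Y : Type*) [NormedAddCommGroup Y] : Nonempty (Idx Y) :=
  ⟨⟨∅, 1, isCompact_empty, one_pos⟩⟩

instance (Y : Type*) [NormedAddCommGroup Y] : SemilatticeSup (Idx Y) where
  le a b := a.s ⊆ b.s ∧ b.eps ≤ a.eps
  le_refl a := ⟨subset_rfl, le_rfl⟩
  le_trans a b c h h' := ⟨h.1.trans h'.1, h'.2.trans h.2⟩
  le_antisymm a b h h' := by
    obtain ⟨s, e, hs, he⟩ := a; obtain ⟨s', e', hs', he'⟩ := b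
    obtain rfl : s = s' := subset_antisymm h.1 h'.1
    obtain rfl : e = e' := le_antisymm h'.2 h.2
    rfl
  sup a b := ⟨a.s ∪ b.s, min a.eps b.eps, a.hs.union b.hs, lt_min a.heps b.heps⟩
  le_sup_left a b := ⟨Set.subset_union_left, min_le_left _ _⟩
  le_sup_right a b := ⟨Set.subset_union_right, min_le_right _ _⟩
  sup_le a b c ha hb := ⟨Set.union_subset ha.1 hb.1, le_min ha.2 hb.2⟩

lemma Idx.le_def {Y : Type*} [NormedAddCommGroup Y] {a b : Idx Y} :
    a ≤ b ↔ a.s ⊆ b.s ∧ b.eps ≤ a.eps := Iff.rfl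

/-- Bounded complex nets have limits along ultrafilters. -/
lemma exists_clim {ι : Type*} (U : Ultrafilter ι) (g : ι → ℂ) {M : ℝ}
    (hg : ∀ d, ‖g d‖ ≤ M) : ∃ c : ℂ, Tendsto g (↑U) (𝓝 c) := by
  have hK : IsCompact (Metric.closedBall (0 : ℂ) M) := isCompact_closedBall _ _
  have hU : Metric.closedBall (0 : ℂ) M ∈ Ultrafilter.map g U := by
    rw [Ultrafilter.mem_map]
    have : g ⁻¹' Metric.closedBall (0 : ℂ) M = Set.univ := by
      ext d; simpa [Metric.mem_closedBall, dist_zero_right] using hg d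
    rw [this]; exact Filter.univ_mem
  obtain ⟨c, _, hc⟩ := hK.ultrafilter_le_nhds (U.map g) (le_principal_iff.2 hU)
  exact ⟨c, hc⟩

end Stmt14Aux

set_option maxHeartbeats 2000000 in
set_option synthInstance.maxHeartbeats 1000000 in
theorem stmt14 (X Y : Type*) [NormedAddCommGroup X] [NormedSpace ℂ X] [CompleteSpace X]
    [NormedAddCommGroup Y] [NormedSpace ℂ Y] [CompleteSpace Y]
    (hY : HasBAP Y) :
    ∃ i : Dual ℂ (Dual ℂ ↥(KOp X Y)) →L[ℂ] Dual ℂ (Dual ℂ (X →L[ℂ] Y)),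
      ∃ R : Dual ℂ (Dual ℂ (X →L[ℂ] Y)) →L[ℂ] Dual ℂ (Dual ℂ ↥(KOp X Y)),
        (∃ c > 0, ∀ v, c * ‖v‖ ≤ ‖i v‖) ∧ ∀ v, R (i v) = v := by
  classical
  obtain ⟨lam, hlam, hsel⟩ := hY
  have hlam0 : (0:ℝ) < lam := lt_of_lt_of_le one_pos hlam
  choose V hVfin hVnorm hVapprox using fun d : Stmt14Aux.Idx Y => hsel d.s d.hs d.eps d.heps
  let U : Ultrafilter (Stmt14Aux.Idx Y) := Ultrafilter.of atTop
  have hUle : (↑U : Filter (Stmt14Aux.Idx Y)) ≤ atTop := Ultrafilter.of_le _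
  set j : ↥(KOp X Y) →L[ℂ] (X →L[ℂ] Y) := (KOp X Y).subtypeL with hj
  have hcpt : ∀ (d : Stmt14Aux.Idx Y) (T : X →L[ℂ] Y), (V d).comp T ∈ KOp X Y := by
    intro d T
    have h1 : IsCompactOperator (⇑(V d) ∘ ⇑T) :=
      (Stmt14Aux.isCompactOperator_of_finiteRank (hVfin d)).comp_clm T
    show IsCompactOperator ⇑((V d).comp T)
    rwa [ContinuousLinearMap.coe_comp']
  set g : Dual ℂ ↥(KOp X Y) → (X →L[ℂ] Y) → Stmt14Aux.Idx Y → ℂ :=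
    fun f T d => f ⟨(V d).comp T, hcpt d T⟩ with hgdef
  have hgbound : ∀ f T d, ‖g f T d‖ ≤ ‖f‖ * lam * ‖T‖ := by
    intro f T d
    calc ‖f ⟨(V d).comp T, hcpt d T⟩‖
        ≤ ‖f‖ * ‖(⟨(V d).comp T, hcpt d T⟩ : ↥(KOp X Y))‖ := f.le_opNorm _
      _ = ‖f‖ * ‖(V d).comp T‖ := rfl
      _ ≤ ‖f‖ * (lam * ‖T‖) := by
          refine mul_le_mul_of_nonneg_left ?_ (norm_nonneg f)
          exact le_trans (ContinuousLinearMap.opNorm_comp_le _ _)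
            (mul_le_mul_of_nonneg_right (hVnorm d) (norm_nonneg T))
      _ = ‖f‖ * lam * ‖T‖ := (mul_assoc _ _ _).symm
  have hex : ∀ f T, ∃ c, Tendsto (g f T) ↑U (𝓝 c) :=
    fun f T => Stmt14Aux.exists_clim U _ (hgbound f T)
  set Φ : Dual ℂ ↥(KOp X Y) → (X →L[ℂ] Y) → ℂ := fun f T => limUnder ↑U (g f T) with hΦdef
  have hΦ : ∀ f T, Tendsto (g f T) ↑U (𝓝 (Φ f T)) := fun f T => tendsto_nhds_limUnder (hex f T)
  have hadd : ∀ f T T', Φ f (T + T') = Φ f T + Φ f T' := by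
    intro f T T'
    refine tendsto_nhds_unique (hΦ f (T + T')) ?_
    have he : g f (T + T') = fun d => g f T d + g f T' d := by
      funext d
      show f _ = f _ + f _
      rw [← map_add]
      congr 1
      apply Subtype.ext
      simp [ContinuousLinearMap.comp_add]
    rw [he]
    exact (hΦ f T).add (hΦ f T')
  have hsmul : ∀ f (c : ℂ) T, Φ f (c • T) = c * Φ f T := by
    intro f c T
    refine tendsto_nhds_unique (hΦ f (c • T)) ?_
    have he : g f (c • T) = fun d => c * g f T d := by
      funext d
      show f _ = c * f _
      rw [← smul_eq_mul, ← map_smul]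
      congr 1
      apply Subtype.ext
      simp [ContinuousLinearMap.comp_smul]
    rw [he]
    exact (hΦ f T).const_mul c
  have hΦbound : ∀ f T, ‖Φ f T‖ ≤ ‖f‖ * lam * ‖T‖ := fun f T =>
    le_of_tendsto (hΦ f T).norm (Filter.Eventually.of_forall (hgbound f T))
  set Wf : Dual ℂ ↥(KOp X Y) → Dual ℂ (X →L[ℂ] Y) := fun f =>
    LinearMap.mkContinuous
      { toFun := Φ f
        map_add' := hadd f
        map_smul' := fun c T => hsmul f c T }
      (‖f‖ * lam) (fun T => hΦbound f T) with hWfdef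
  have hWf_apply : ∀ f T, Wf f T = Φ f T := fun f T => rfl
  have hWadd : ∀ f f', Wf (f + f') = Wf f + Wf f' := by
    intro f f'
    ext T
    show Φ (f + f') T = Φ f T + Φ f' T
    refine tendsto_nhds_unique (hΦ (f + f') T) ?_
    have he : g (f + f') T = fun d => g f T d + g f' T d := by
      funext d; rfl
    rw [he]
    exact (hΦ f T).add (hΦ f' T)
  have hWsmul : ∀ (c : ℂ) f, Wf (c • f) = c • Wf f := by
    intro c f
    ext T
    show Φ (c • f) T = c * Φ f T
    refine tendsto_nhds_unique (hΦ (c • f) T) ?_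
    have he : g (c • f) T = fun d => c * g f T d := by
      funext d; rfl
    rw [he]
    exact (hΦ f T).const_mul c
  set W : Dual ℂ ↥(KOp X Y) →L[ℂ] Dual ℂ (X →L[ℂ] Y) :=
    LinearMap.mkContinuous
      { toFun := Wf
        map_add' := hWadd
        map_smul' := hWsmul }
      lam (fun f => by
        show ‖Wf f‖ ≤ lam * ‖f‖
        rw [mul_comm]
        exact LinearMap.mkContinuous_norm_le _ (mul_nonneg (norm_nonneg f) hlam0.le)
          (fun T => hΦbound f T)) with hWdef
  have hW_apply : ∀ f, W f = Wf f := fun f => rfl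
  -- the key property : (W f) ∘ j = f
  have hkey : ∀ (f : Dual ℂ ↥(KOp X Y)) (T : ↥(KOp X Y)), W f (j T) = f T := by
    intro f T
    obtain ⟨T0, hT0mem⟩ := T
    show Φ f T0 = f ⟨T0, hT0mem⟩
    refine Tendsto.limUnder_eq ?_
    have hTc : Tendsto (fun d => (⟨(V d).comp T0, hcpt d T0⟩ : ↥(KOp X Y))) (↑U)
        (𝓝 ⟨T0, hT0mem⟩) := by
      rw [Topology.IsInducing.subtypeVal.tendsto_nhds_iff]
      have hsub : Tendsto (fun d => (V d).comp T0 - T0) (↑U) (𝓝 0) := by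
        rw [NormedAddCommGroup.tendsto_nhds_zero]
        intro ε hε
        have hTop : IsCompactOperator ((T0 : X →ₗ[ℂ] Y)) := hT0mem
        have hK0 : IsCompact (closure ((T0 : X →ₗ[ℂ] Y) '' Metric.closedBall 0 1)) :=
          IsCompactOperator.isCompact_closure_image_closedBall (𝕜₁ := ℂ) hTop 1
        set d0 : Stmt14Aux.Idx Y :=
          ⟨closure ((T0 : X →ₗ[ℂ] Y) '' Metric.closedBall 0 1), ε / 2, hK0, half_pos hε⟩ with hd0
        have hev : ∀ᶠ d in (↑U : Filter (Stmt14Aux.Idx Y)), d0 ≤ d :=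
          hUle (eventually_ge_atTop d0)
        filter_upwards [hev] with d hd
        have hnorm : ‖(V d).comp T0 - T0‖ ≤ ε / 2 := by
          refine ContinuousLinearMap.opNorm_le_bound' _ (half_pos hε).le ?_
          intro x hx
          have hxpos : 0 < ‖x‖ := lt_of_le_of_ne (norm_nonneg x) (Ne.symm hx)
          set y : X := ((‖x‖ : ℂ))⁻¹ • x with hy
          have hyball : y ∈ Metric.closedBall (0 : X) 1 := by
            rw [Metric.mem_closedBall, dist_zero_right, hy, norm_smul, norm_inv]
            simp only [Complex.norm_real, Real.norm_eq_abs, abs_norm]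
            rw [inv_mul_cancel₀ (ne_of_gt hxpos)]
          have hTy : T0 y ∈ d.s := by
            apply hd.1
            exact subset_closure ⟨y, hyball, rfl⟩
          have happ : ‖V d (T0 y) - T0 y‖ ≤ d.eps := hVapprox d _ hTy
          have heps : d.eps ≤ ε / 2 := hd.2
          have h1 : ‖((V d).comp T0 - T0) y‖ ≤ ε / 2 := by
            simpa using happ.trans heps
          have hxy : x = ((‖x‖ : ℂ)) • y := by
            rw [hy, smul_smul, mul_inv_cancel₀, one_smul]
            simpa using ne_of_gt hxpos
          calc ‖((V d).comp T0 - T0) x‖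
              = ‖((V d).comp T0 - T0) (((‖x‖ : ℂ)) • y)‖ := by rw [← hxy]
            _ = ‖x‖ * ‖((V d).comp T0 - T0) y‖ := by
                rw [map_smul, norm_smul]
                simp [Complex.norm_real]
            _ ≤ ‖x‖ * (ε / 2) := mul_le_mul_of_nonneg_left h1 (norm_nonneg x)
            _ = ε / 2 * ‖x‖ := mul_comm _ _
        exact lt_of_le_of_lt hnorm (half_lt_self hε)
      have hfin := hsub.add_const T0
      simpa [Function.comp_def] using hfin
    have hcomp := (f.continuous.tendsto ⟨T0, hT0mem⟩).comp hTc
    exact hcomp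
  let i0 : Dual ℂ (Dual ℂ ↥(KOp X Y)) →L[ℂ] Dual ℂ (Dual ℂ (X →L[ℂ] Y)) :=
    Stmt14Aux.tr (Stmt14Aux.tr j)
  let R0 : Dual ℂ (Dual ℂ (X →L[ℂ] Y)) →L[ℂ] Dual ℂ (Dual ℂ ↥(KOp X Y)) :=
    Stmt14Aux.tr W
  refine ⟨i0, R0, ⟨1, one_pos, ?_⟩, ?_⟩
  · intro v
    rw [one_mul]
    refine ContinuousLinearMap.opNorm_le_bound v (norm_nonneg _) ?_
    intro f
    obtain ⟨gext, hgext, hgnorm⟩ := exists_extension_norm_eq (KOp X Y) f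
    have hrest : Stmt14Aux.tr j gext = f := by
      ext x
      show gext (j x) = f x
      exact hgext x
    calc ‖v f‖ = ‖v (Stmt14Aux.tr j gext)‖ := by rw [hrest]
      _ = ‖i0 v gext‖ := rfl
      _ ≤ ‖i0 v‖ * ‖gext‖ := ContinuousLinearMap.le_opNorm _ _
      _ = ‖i0 v‖ * ‖f‖ := by rw [hgnorm]; rfl
  · intro v
    ext f
    show v (Stmt14Aux.tr j (W f)) = v f
    congr 1
    ext T
    exact hkey f T
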